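/- Dual causality: a unitary U is χζ-causal (meaning (UρU†)_{|ζ} = (Uρ_{|χ}U†)_{|ζ} for all trace-class ρ) if and only if for every ζ-local operator A, the operator U†AU is χ-local; moreover if U is χζ-causal and A is strictly ζ-local then U†AU is strictly χ-local. -/

import Mathlib

open Matrix

/-- A restriction on finite graphs: `χ G ⊆ G` and `χ G ⊆ H ⊆ G → χ H = χ G`. -/
def IsRestriction {S : Type*} [DecidableEq S] (χ : Finset S → Finset S) : Prop :=
  (∀ G : Finset S, χ G ⊆ G) ∧ ∀ G H : Finset S, χ G ⊆ H → H ⊆ G → χ H = χ G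

/-- The generalized partial trace on the space of operators over the Hilbert
space with orthonormal basis indexed by graphs: the linear extension of
`(|G⟩⟨H|)_{|χ} := |G_χ⟩⟨H_χ| · ⟨H_{χ̄}|G_{χ̄}⟩`. -/
noncomputable def ptr {S : Type*} [DecidableEq S] [Fintype S] (χ : Finset S → Finset S)
    (ρ : Matrix (Finset S) (Finset S) ℂ) : Matrix (Finset S) (Finset S) ℂ :=
  Matrix.of fun K L => ∑ G : Finset S, ∑ H : Finset S,
    if χ G = K ∧ χ H = L ∧ G \ χ G = H \ χ H then ρ G H else 0

/-- `A` is `χ`-local. -/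
def IsLocalOp {S : Type*} [DecidableEq S] (χ : Finset S → Finset S)
    (A : Matrix (Finset S) (Finset S) ℂ) : Prop :=
  ∀ G H : Finset S,
    A H G = A (χ H) (χ G) * (if H \ χ H = G \ χ G then 1 else 0)

/-- `A` is strictly `ζ`-local: `A`, `A†A` and `AA†` are `ζ`-local. -/
def IsStrictlyLocalOp {S : Type*} [DecidableEq S] [Fintype S] (ζ : Finset S → Finset S)
    (A : Matrix (Finset S) (Finset S) ℂ) : Prop :=
  IsLocalOp ζ A ∧ IsLocalOp ζ (A.conjTranspose * A) ∧
    IsLocalOp ζ (A * A.conjTranspose)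

/-- `U` is `χζ`-causal: `(UρU†)_{|ζ} = (Uρ_{|χ}U†)_{|ζ}` for all trace-class `ρ`. -/
def IsCausal {S : Type*} [DecidableEq S] [Fintype S] (χ ζ : Finset S → Finset S)
    (U : Matrix (Finset S) (Finset S) ℂ) : Prop :=
  ∀ ρ : Matrix (Finset S) (Finset S) ℂ,
    ptr ζ (U * ρ * U.conjTranspose) = ptr ζ (U * ptr χ ρ * U.conjTranspose)

/-!
The partial trace `ptr χ` has an adjoint `ptrAdjoint χ` for the pairing `(A, ρ) ↦ tr (A ρ)`.
Its fixed points are exactly the `χ`-local operators, and for an idempotent `χ` (e.g. a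
restriction) its values are `χ`-local. This gives dual locality (`A` is `χ`-local iff
`tr (A ρ) = tr (A ρ_{|χ})` for all `ρ`) and local tomography (the `ptrAdjoint` of a matrix unit
is a `ζ`-local observable reading off one entry of `ρ_{|ζ}`). Cyclicity of the trace then moves
`U` from the state to the observable, and conjugation by a unitary is a `⋆`-automorphism, so
it maps `A†A` and `AA†` to the corresponding products of `U†AU`.
-/
theorem IsRestriction.idem {S : Type*} [DecidableEq S] {χ : Finset S → Finset S}
    (hχ : IsRestriction χ) (G : Finset S) : χ (χ G) = χ G :=
  hχ.2 G (χ G) subset_rfl (hχ.1 G)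

theorem Matrix.trace_mul_mul_mul_mul {n R : Type*} [Fintype n] [CommSemiring R]
    (V A U ρ : Matrix n n R) : (V * A * U * ρ).trace = (A * (U * ρ * V)).trace := by
  rw [Matrix.mul_assoc, Matrix.mul_assoc, Matrix.trace_mul_comm]
  simp only [Matrix.mul_assoc]

section

variable {S : Type*} [DecidableEq S]

def ptrAdjoint (χ : Finset S → Finset S) (A : Matrix (Finset S) (Finset S) ℂ) :
    Matrix (Finset S) (Finset S) ℂ :=
  Matrix.of fun H G => A (χ H) (χ G) * if H \ χ H = G \ χ G then 1 else 0

theorem isLocalOp_iff_ptrAdjoint_eq {χ : Finset S → Finset S}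
    {A : Matrix (Finset S) (Finset S) ℂ} : IsLocalOp χ A ↔ ptrAdjoint χ A = A := by
  rw [← Matrix.ext_iff, IsLocalOp, forall_comm]
  exact forall₂_congr fun _ _ => eq_comm

theorem isLocalOp_ptrAdjoint {χ : Finset S → Finset S} (hχ : ∀ G, χ (χ G) = χ G)
    (A : Matrix (Finset S) (Finset S) ℂ) : IsLocalOp χ (ptrAdjoint χ A) := by
  intro G H
  simp [ptrAdjoint, hχ]

variable [Fintype S]

theorem trace_mul_ptr (χ : Finset S → Finset S) (A ρ : Matrix (Finset S) (Finset S) ℂ) :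
    (A * ptr χ ρ).trace = (ptrAdjoint χ A * ρ).trace := by
  simp only [Matrix.trace, Matrix.diag, Matrix.mul_apply, ptr, ptrAdjoint, Matrix.of_apply,
    Finset.mul_sum, mul_ite, mul_zero]
  conv_lhs => enter [2, X]; rw [Finset.sum_comm]; enter [2, G]; rw [Finset.sum_comm]
  simp only [ite_and, Finset.sum_ite_eq, Finset.mem_univ, if_true]
  rw [Finset.sum_comm]
  conv_lhs => enter [2, G]; rw [Finset.sum_comm]
  simp only [Finset.sum_ite_eq, Finset.mem_univ, if_true]
  rw [Finset.sum_comm]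
  refine Finset.sum_congr rfl fun H _ => Finset.sum_congr rfl fun G _ => ?_
  simp only [eq_comm (a := G \ χ G), mul_one, ite_mul, zero_mul]

theorem isLocalOp_iff_trace_mul_ptr {χ : Finset S → Finset S}
    {A : Matrix (Finset S) (Finset S) ℂ} :
    IsLocalOp χ A ↔ ∀ ρ, (A * ρ).trace = (A * ptr χ ρ).trace := by
  simp only [trace_mul_ptr, isLocalOp_iff_ptrAdjoint_eq]
  refine ⟨fun h ρ => by rw [h], fun h => Matrix.ext fun H G => ?_⟩
  simpa [Matrix.trace_mul_single] using (h (Matrix.single G H 1)).symm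

theorem ptr_eq_of_forall_isLocalOp_trace_mul_eq {ζ : Finset S → Finset S}
    (hζ : ∀ G, ζ (ζ G) = ζ G) {ρ σ : Matrix (Finset S) (Finset S) ℂ}
    (h : ∀ A, IsLocalOp ζ A → (A * ρ).trace = (A * σ).trace) : ptr ζ ρ = ptr ζ σ := by
  ext K L
  have probe : ∀ τ, ptr ζ τ K L = (ptrAdjoint ζ (Matrix.single L K 1) * τ).trace := by
    intro τ
    simp [← trace_mul_ptr, Matrix.trace_single_mul]
  rw [probe, probe, h _ (isLocalOp_ptrAdjoint hζ _)]

theorem isCausal_iff_forall_isLocalOp_conj {χ ζ : Finset S → Finset S}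
    (hζ : ∀ G, ζ (ζ G) = ζ G) (U : Matrix (Finset S) (Finset S) ℂ) :
    IsCausal χ ζ U ↔ ∀ A, IsLocalOp ζ A → IsLocalOp χ (Uᴴ * A * U) := by
  refine ⟨fun hU A hA => isLocalOp_iff_trace_mul_ptr.2 fun ρ => ?_,
    fun h ρ => ptr_eq_of_forall_isLocalOp_trace_mul_eq hζ fun A hA => ?_⟩
  · have hA := isLocalOp_iff_trace_mul_ptr.1 hA
    rw [Matrix.trace_mul_mul_mul_mul, Matrix.trace_mul_mul_mul_mul, hA, hU ρ, ← hA]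
  · rw [← Matrix.trace_mul_mul_mul_mul, isLocalOp_iff_trace_mul_ptr.1 (h A hA),
      Matrix.trace_mul_mul_mul_mul]

theorem IsStrictlyLocalOp.conj {χ ζ : Finset S → Finset S}
    {U A : Matrix (Finset S) (Finset S) ℂ}
    (hU : U ∈ Matrix.unitaryGroup (Finset S) ℂ)
    (hloc : ∀ B, IsLocalOp ζ B → IsLocalOp χ (Uᴴ * B * U)) (hA : IsStrictlyLocalOp ζ A) :
    IsStrictlyLocalOp χ (Uᴴ * A * U) := by
  set φ := (Unitary.conjStarAlgAut ℂ _ ⟨U, hU⟩).symm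
  have hφ : ∀ B, Uᴴ * B * U = φ B := fun _ => rfl
  obtain ⟨h0, h1, h2⟩ := hA
  refine ⟨hloc A h0, ?_, ?_⟩
  · have h := hloc _ h1
    rwa [hφ, ← Matrix.star_eq_conjTranspose, map_mul, map_star, ← hφ] at h
  · have h := hloc _ h2
    rwa [hφ, ← Matrix.star_eq_conjTranspose, map_mul, map_star, ← hφ] at h

end

theorem dual_causality_general {S : Type*} [DecidableEq S] [Fintype S]
    (χ ζ : Finset S → Finset S) (hζ : IsRestriction ζ)
    (U : Matrix (Finset S) (Finset S) ℂ)
    (hU : U ∈ Matrix.unitaryGroup (Finset S) ℂ) :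
    (IsCausal χ ζ U ↔
      ∀ A : Matrix (Finset S) (Finset S) ℂ,
        IsLocalOp ζ A → IsLocalOp χ (U.conjTranspose * A * U)) ∧
    (IsCausal χ ζ U →
      ∀ A : Matrix (Finset S) (Finset S) ℂ,
        IsStrictlyLocalOp ζ A → IsStrictlyLocalOp χ (U.conjTranspose * A * U)) := by
  have hcausal := isCausal_iff_forall_isLocalOp_conj (χ := χ) hζ.idem U
  exact ⟨hcausal, fun hc _ => IsStrictlyLocalOp.conj hU (hcausal.1 hc)⟩

/-- Dual causality: a unitary `U` is `χζ`-causal iff for every `ζ`-local `A`,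
`U†AU` is `χ`-local; moreover if `U` is `χζ`-causal and `A` is strictly
`ζ`-local then `U†AU` is strictly `χ`-local. -/
theorem dual_causality {S : Type*} [DecidableEq S] [Fintype S]
    (χ ζ : Finset S → Finset S) (hχ : IsRestriction χ) (hζ : IsRestriction ζ)
    (U : Matrix (Finset S) (Finset S) ℂ)
    (hU : U ∈ Matrix.unitaryGroup (Finset S) ℂ) :
    (IsCausal χ ζ U ↔
      ∀ A : Matrix (Finset S) (Finset S) ℂ,
        IsLocalOp ζ A → IsLocalOp χ (U.conjTranspose * A * U)) ∧
    (IsCausal χ ζ U →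
      ∀ A : Matrix (Finset S) (Finset S) ℂ,
        IsStrictlyLocalOp ζ A → IsStrictlyLocalOp χ (U.conjTranspose * A * U)) :=
  dual_causality_general χ ζ hζ U hU
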